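/- arXiv:2204.01432 — 2 statements merged into one kernel-verified Lean document; each statement's English description precedes it below -/
import Mathlib

section
/- Suppose κ ≥ 0 and w is a classical solution of the controlled tube system whose boundary input is the negative-velocity feedback u(t) = −κ·(∂²w/∂s∂t)(1,t). Then for every t > 0 one has E′(t) = −βη·((∂w/∂t)(1,t))² − κ·((∂²w/∂s∂t)(1,t))² ≤ 0; in particular the energy E is nonincreasing on (0,∞). -/
open Set MeasureTheory

/-- ∂w/∂s -/
noncomputable def dws (w : ℝ → ℝ → ℝ) (s t : ℝ) : ℝ := deriv (fun σ => w σ t) s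
/-- ∂²w/∂s² -/
noncomputable def dwss (w : ℝ → ℝ → ℝ) (s t : ℝ) : ℝ := deriv (fun σ => dws w σ t) s
/-- ∂³w/∂s³ -/
noncomputable def dwsss (w : ℝ → ℝ → ℝ) (s t : ℝ) : ℝ := deriv (fun σ => dwss w σ t) s
/-- ∂⁴w/∂s⁴ -/
noncomputable def dwssss (w : ℝ → ℝ → ℝ) (s t : ℝ) : ℝ := deriv (fun σ => dwsss w σ t) s
/-- ∂w/∂t -/
noncomputable def dwt (w : ℝ → ℝ → ℝ) (s t : ℝ) : ℝ := deriv (fun τ => w s τ) t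
/-- ∂²w/∂t² -/
noncomputable def dwtt (w : ℝ → ℝ → ℝ) (s t : ℝ) : ℝ := deriv (fun τ => dwt w s τ) t
/-- ∂²w/∂s∂t -/
noncomputable def dwst (w : ℝ → ℝ → ℝ) (s t : ℝ) : ℝ := deriv (fun σ => dwt w σ t) s

/-- A classical solution of the controlled tube system with boundary input `u`. -/
def IsClassicalSolution (β η γ : ℝ) (u : ℝ → ℝ) (w : ℝ → ℝ → ℝ) : Prop :=
  ContDiff ℝ 4 (Function.uncurry w) ∧
  (∀ s ∈ Icc (0:ℝ) 1, ∀ t > (0:ℝ),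
    dwssss w s t - (γ - η^2) * dwss w s t + 2*β*η * dwst w s t + dwtt w s t = 0) ∧
  (∀ t > (0:ℝ), w 0 t = 0) ∧
  (∀ t > (0:ℝ), dwss w 0 t = 0) ∧
  (∀ t > (0:ℝ), dwss w 1 t = u t) ∧
  (∀ t > (0:ℝ), dwsss w 1 t = (γ - η^2) * dws w 1 t)

/-- The energy of the tube system. -/
noncomputable def energy (η γ : ℝ) (w : ℝ → ℝ → ℝ) (t : ℝ) : ℝ :=
  (1/2) * ∫ s in (0:ℝ)..1,
    ((dwss w s t)^2 + (γ - η^2) * (dws w s t)^2 + (dwt w s t)^2)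

/-! Differentiating under the integral and replacing `w_tt` by means of the equation, the time
derivative of the energy density becomes an exact `s`-derivative: it equals `2 ∂ₛΦ` for the flux
`Φ = w_ss w_st - w_t w_sss + (γ - η²) w_t w_s - βη w_t²`, hence `E'(t) = Φ(1,t) - Φ(0,t)`.
The boundary conditions at `s = 0` give `Φ(0,t) = 0`, and at `s = 1` the `w_sss` and `w_s` terms
cancel, leaving `Φ(1,t) = u(t) w_st(1,t) - βη w_t(1,t)²`. For the feedback `u = -κ w_st(1,·)`
this is `-κ w_st(1,t)² - βη w_t(1,t)² ≤ 0`. -/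

open Function

noncomputable def partialFst (G : ℝ × ℝ → ℝ) (p : ℝ × ℝ) : ℝ := fderiv ℝ G p (1, 0)

noncomputable def partialSnd (G : ℝ × ℝ → ℝ) (p : ℝ × ℝ) : ℝ := fderiv ℝ G p (0, 1)

local notation "∂₁" => partialFst
local notation "∂₂" => partialSnd

section Partial

variable {G : ℝ × ℝ → ℝ}

theorem DifferentiableAt.hasDerivAt_partialFst {s t : ℝ} (hG : DifferentiableAt ℝ G (s, t)) :
    HasDerivAt (fun σ => G (σ, t)) (∂₁ G (s, t)) s :=
  hG.hasFDerivAt.comp_hasDerivAt s ((hasDerivAt_id s).prodMk (hasDerivAt_const s t))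

theorem DifferentiableAt.hasDerivAt_partialSnd {s t : ℝ} (hG : DifferentiableAt ℝ G (s, t)) :
    HasDerivAt (fun τ => G (s, τ)) (∂₂ G (s, t)) t :=
  hG.hasFDerivAt.comp_hasDerivAt t ((hasDerivAt_const t s).prodMk (hasDerivAt_id t))

theorem ContDiff.partialFst {m n : WithTop ℕ∞} (hG : ContDiff ℝ n G) (hmn : m + 1 ≤ n) :
    ContDiff ℝ m (∂₁ G) :=
  (hG.fderiv_right hmn).clm_apply contDiff_const

theorem ContDiff.partialSnd {m n : WithTop ℕ∞} (hG : ContDiff ℝ n G) (hmn : m + 1 ≤ n) :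
    ContDiff ℝ m (∂₂ G) :=
  (hG.fderiv_right hmn).clm_apply contDiff_const

theorem partialFst_partialSnd (hG : ContDiff ℝ 2 G) (p : ℝ × ℝ) :
    ∂₁ (∂₂ G) p = ∂₂ (∂₁ G) p := by
  have hG' : Differentiable ℝ (fderiv ℝ G) :=
    (hG.fderiv_right (m := 1) le_rfl).differentiable one_ne_zero
  show fderiv ℝ (fun q => fderiv ℝ G q (0, 1)) p (1, 0) =
    fderiv ℝ (fun q => fderiv ℝ G q (1, 0)) p (0, 1)
  rw [fderiv_clm_apply (hG' p) (differentiableAt_const _),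
    fderiv_clm_apply (hG' p) (differentiableAt_const _)]
  simpa using hG.contDiffAt.isSymmSndFDerivAt (by simp) _ _

end Partial

theorem hasDerivAt_intervalIntegral_of_continuous {E : Type*} [NormedAddCommGroup E]
    [NormedSpace ℝ E] {F F' : ℝ × ℝ → E} (hF : Continuous F) (hF' : Continuous F')
    (hFF' : ∀ s τ, HasDerivAt (fun τ => F (s, τ)) (F' (s, τ)) τ) (a b t : ℝ) :
    HasDerivAt (fun τ => ∫ s in a..b, F (s, τ)) (∫ s in a..b, F' (s, t)) t := by
  obtain ⟨M, hM⟩ := ((isCompact_uIcc (a := a) (b := b)).prod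
    (isCompact_closedBall t 1)).exists_bound_of_continuousOn hF'.continuousOn
  have hslice (τ : ℝ) : Continuous fun s : ℝ => (s, τ) := .prodMk_left τ
  exact (intervalIntegral.hasDerivAt_integral_of_dominated_loc_of_deriv_le
    (bound := fun _ => M) (Metric.ball_mem_nhds t one_pos)
    (.of_forall fun τ => (hF.comp (hslice τ)).aestronglyMeasurable)
    ((hF.comp (hslice t)).intervalIntegrable a b)
    (hF'.comp (hslice t)).aestronglyMeasurable
    (.of_forall fun s hs τ hτ =>
      hM (s, τ) ⟨uIoc_subset_uIcc hs, Metric.ball_subset_closedBall hτ⟩)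
    intervalIntegrable_const
    (.of_forall fun s _ τ _ => hFF' s τ)).2

section Identification

variable {w : ℝ → ℝ → ℝ}

theorem dws_eq (hw : Differentiable ℝ (uncurry w)) (s t : ℝ) :
    dws w s t = ∂₁ (uncurry w) (s, t) :=
  (hw (s, t)).hasDerivAt_partialFst.deriv

theorem dwt_eq (hw : Differentiable ℝ (uncurry w)) (s t : ℝ) :
    dwt w s t = ∂₂ (uncurry w) (s, t) :=
  (hw (s, t)).hasDerivAt_partialSnd.deriv

theorem dwss_eq (hw : ContDiff ℝ 2 (uncurry w)) (s t : ℝ) :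
    dwss w s t = ∂₁ (∂₁ (uncurry w)) (s, t) := by
  simp only [dwss, dws_eq (hw.differentiable two_ne_zero)]
  exact ((hw.partialFst le_rfl).differentiable one_ne_zero (s, t)).hasDerivAt_partialFst.deriv

theorem dwsss_eq (hw : ContDiff ℝ 3 (uncurry w)) (s t : ℝ) :
    dwsss w s t = ∂₁ (∂₁ (∂₁ (uncurry w))) (s, t) := by
  simp only [dwsss, dwss_eq (hw.of_le (by norm_num))]
  have hss : ContDiff ℝ 1 (∂₁ (∂₁ (uncurry w))) := (hw.partialFst le_rfl).partialFst le_rfl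
  exact (hss.differentiable one_ne_zero (s, t)).hasDerivAt_partialFst.deriv

theorem dwssss_eq (hw : ContDiff ℝ 4 (uncurry w)) (s t : ℝ) :
    dwssss w s t = ∂₁ (∂₁ (∂₁ (∂₁ (uncurry w)))) (s, t) := by
  simp only [dwssss, dwsss_eq (hw.of_le (by norm_num))]
  have hsss : ContDiff ℝ 1 (∂₁ (∂₁ (∂₁ (uncurry w)))) :=
    ((hw.partialFst (m := 3) le_rfl).partialFst le_rfl).partialFst le_rfl
  exact (hsss.differentiable one_ne_zero (s, t)).hasDerivAt_partialFst.deriv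

theorem dwtt_eq (hw : ContDiff ℝ 2 (uncurry w)) (s t : ℝ) :
    dwtt w s t = ∂₂ (∂₂ (uncurry w)) (s, t) := by
  simp only [dwtt, dwt_eq (hw.differentiable two_ne_zero)]
  exact ((hw.partialSnd le_rfl).differentiable one_ne_zero (s, t)).hasDerivAt_partialSnd.deriv

theorem dwst_eq (hw : ContDiff ℝ 2 (uncurry w)) (s t : ℝ) :
    dwst w s t = ∂₂ (∂₁ (uncurry w)) (s, t) := by
  simp only [dwst, dwt_eq (hw.differentiable two_ne_zero), ← partialFst_partialSnd hw]
  exact ((hw.partialSnd le_rfl).differentiable one_ne_zero (s, t)).hasDerivAt_partialFst.deriv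

end Identification

section Tube

variable (β η γ : ℝ) {G : ℝ × ℝ → ℝ}

noncomputable def tubeOperator (G : ℝ × ℝ → ℝ) (p : ℝ × ℝ) : ℝ :=
  ∂₁ (∂₁ (∂₁ (∂₁ G))) p - (γ - η ^ 2) * ∂₁ (∂₁ G) p + 2 * β * η * ∂₂ (∂₁ G) p + ∂₂ (∂₂ G) p

noncomputable def tubeEnergyDensity (G : ℝ × ℝ → ℝ) (p : ℝ × ℝ) : ℝ :=
  ∂₁ (∂₁ G) p ^ 2 + (γ - η ^ 2) * ∂₁ G p ^ 2 + ∂₂ G p ^ 2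

noncomputable def tubeEnergyRate (G : ℝ × ℝ → ℝ) (p : ℝ × ℝ) : ℝ :=
  ∂₁ (∂₁ G) p * ∂₂ (∂₁ (∂₁ G)) p + (γ - η ^ 2) * (∂₁ G p * ∂₂ (∂₁ G) p) + ∂₂ G p * ∂₂ (∂₂ G) p

noncomputable def tubeFlux (G : ℝ × ℝ → ℝ) (p : ℝ × ℝ) : ℝ :=
  ∂₁ (∂₁ G) p * ∂₂ (∂₁ G) p - ∂₂ G p * ∂₁ (∂₁ (∂₁ G)) p + (γ - η ^ 2) * (∂₂ G p * ∂₁ G p)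
    - β * η * ∂₂ G p ^ 2

theorem continuous_tubeEnergyDensity (hG : ContDiff ℝ 2 G) :
    Continuous (tubeEnergyDensity η γ G) := by
  have := ((hG.partialFst (m := 1) le_rfl).partialFst (m := 0) le_rfl).continuous
  have := (hG.partialFst (m := 1) le_rfl).continuous
  have := (hG.partialSnd (m := 1) le_rfl).continuous
  unfold tubeEnergyDensity
  fun_prop

theorem continuous_tubeEnergyRate (hG : ContDiff ℝ 3 G) :
    Continuous (tubeEnergyRate η γ G) := by
  have hs : ContDiff ℝ 2 (∂₁ G) := hG.partialFst le_rfl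
  have hss : ContDiff ℝ 1 (∂₁ (∂₁ G)) := hs.partialFst le_rfl
  have ht : ContDiff ℝ 2 (∂₂ G) := hG.partialSnd le_rfl
  have := hss.continuous; have := hs.continuous; have := ht.continuous
  have := (hss.partialSnd (m := 0) le_rfl).continuous
  have := (hs.partialSnd (m := 1) le_rfl).continuous
  have := (ht.partialSnd (m := 1) le_rfl).continuous
  unfold tubeEnergyRate
  fun_prop

theorem hasDerivAt_tubeEnergyDensity (hG : ContDiff ℝ 3 G) (s t : ℝ) :
    HasDerivAt (fun τ => tubeEnergyDensity η γ G (s, τ)) (2 * tubeEnergyRate η γ G (s, t)) t := by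
  have hss := ((hG.partialFst (m := 2) le_rfl).partialFst (m := 1) le_rfl).differentiable
    one_ne_zero (s, t)
  have hs := (hG.partialFst (m := 2) le_rfl).differentiable two_ne_zero (s, t)
  have ht := (hG.partialSnd (m := 2) le_rfl).differentiable two_ne_zero (s, t)
  refine ((hss.hasDerivAt_partialSnd.fun_pow 2).add
    ((hs.hasDerivAt_partialSnd.fun_pow 2).const_mul _)
    |>.add (ht.hasDerivAt_partialSnd.fun_pow 2)).congr_deriv ?_
  simp only [tubeEnergyRate]
  ring

theorem hasDerivAt_energy_of_contDiff {w : ℝ → ℝ → ℝ} (hw : ContDiff ℝ 3 (uncurry w)) (t : ℝ) :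
    HasDerivAt (energy η γ w) (∫ s in (0:ℝ)..1, tubeEnergyRate η γ (uncurry w) (s, t)) t := by
  have hdensity : energy η γ w =
      fun τ => 1 / 2 * ∫ s in (0:ℝ)..1, tubeEnergyDensity η γ (uncurry w) (s, τ) := by
    have hw1 : Differentiable ℝ (uncurry w) := hw.differentiable three_ne_zero
    ext τ
    simp only [energy, tubeEnergyDensity, dwss_eq (hw.of_le (by norm_num)), dws_eq hw1, dwt_eq hw1]
  rw [hdensity]
  refine ((hasDerivAt_intervalIntegral_of_continuous
    (continuous_tubeEnergyDensity η γ (hw.of_le (by norm_num)))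
    ((continuous_tubeEnergyRate η γ hw).const_mul 2)
    (hasDerivAt_tubeEnergyDensity η γ hw) 0 1 t).const_mul (1 / 2)).congr_deriv ?_
  rw [intervalIntegral.integral_const_mul]
  ring

theorem hasDerivAt_tubeFlux (hG : ContDiff ℝ 4 G) {s t : ℝ}
    (hpde : tubeOperator β η γ G (s, t) = 0) :
    HasDerivAt (fun σ => tubeFlux β η γ G (σ, t)) (tubeEnergyRate η γ G (s, t)) s := by
  have hs : ContDiff ℝ 3 (∂₁ G) := hG.partialFst le_rfl
  have hss : ContDiff ℝ 2 (∂₁ (∂₁ G)) := hs.partialFst le_rfl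
  have hsss : ContDiff ℝ 1 (∂₁ (∂₁ (∂₁ G))) := hss.partialFst le_rfl
  have hst : ContDiff ℝ 2 (∂₂ (∂₁ G)) := hs.partialSnd le_rfl
  have ht : ContDiff ℝ 3 (∂₂ G) := hG.partialSnd le_rfl
  have d_s := (hs.differentiable three_ne_zero (s, t)).hasDerivAt_partialFst
  have d_ss := (hss.differentiable two_ne_zero (s, t)).hasDerivAt_partialFst
  have d_sss := (hsss.differentiable one_ne_zero (s, t)).hasDerivAt_partialFst
  have d_st := (hst.differentiable two_ne_zero (s, t)).hasDerivAt_partialFst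
  have d_t := (ht.differentiable three_ne_zero (s, t)).hasDerivAt_partialFst
  have hsym : ∂₁ (∂₂ G) (s, t) = ∂₂ (∂₁ G) (s, t) :=
    partialFst_partialSnd (hG.of_le (by norm_num)) _
  have hsym' : ∂₁ (∂₂ (∂₁ G)) (s, t) = ∂₂ (∂₁ (∂₁ G)) (s, t) :=
    partialFst_partialSnd (hs.of_le (by norm_num)) _
  refine ((d_ss.mul d_st).sub (d_t.mul d_sss) |>.add ((d_t.mul d_s).const_mul _)
    |>.sub ((d_t.fun_pow 2).const_mul _)).congr_deriv ?_
  rw [hsym, hsym']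
  simp only [tubeEnergyRate, tubeOperator] at hpde ⊢
  linear_combination (-∂₂ G (s, t)) * hpde

theorem integral_tubeEnergyRate (hG : ContDiff ℝ 4 G) {a b t : ℝ}
    (hpde : ∀ s ∈ uIcc a b, tubeOperator β η γ G (s, t) = 0) :
    ∫ s in a..b, tubeEnergyRate η γ G (s, t) =
      tubeFlux β η γ G (b, t) - tubeFlux β η γ G (a, t) := by
  exact intervalIntegral.integral_eq_sub_of_hasDerivAt
    (fun s hs => hasDerivAt_tubeFlux β η γ hG (hpde s hs))
    (((continuous_tubeEnergyRate η γ (hG.of_le (by norm_num))).comp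
      (.prodMk_left t)).intervalIntegrable a b)

end Tube

theorem IsClassicalSolution.hasDerivAt_energy {β η γ : ℝ} {u : ℝ → ℝ} {w : ℝ → ℝ → ℝ}
    (hw : IsClassicalSolution β η γ u w) {t : ℝ} (ht : 0 < t) :
    HasDerivAt (energy η γ w) (u t * dwst w 1 t - β * η * dwt w 1 t ^ 2) t := by
  obtain ⟨hC, hpde, hw0, hwss0, hwss1, hwsss1⟩ := hw
  have hC1 : Differentiable ℝ (uncurry w) := hC.differentiable four_ne_zero
  have hC2 : ContDiff ℝ 2 (uncurry w) := hC.of_le (by norm_num)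
  have hpde' : ∀ s ∈ uIcc (0:ℝ) 1, tubeOperator β η γ (uncurry w) (s, t) = 0 := fun s hs => by
    rw [tubeOperator, ← dwssss_eq hC, ← dwss_eq hC2, ← dwst_eq hC2, ← dwtt_eq hC2]
    exact hpde s (by rwa [uIcc_of_le zero_le_one] at hs) t ht
  have hwt0 : dwt w 0 t = 0 := by
    have hev : (fun τ => w 0 τ) =ᶠ[nhds t] fun _ => 0 :=
      Filter.eventually_of_mem (Ioi_mem_nhds ht) hw0
    rw [dwt, hev.deriv_eq, deriv_const]
  have hflux0 : tubeFlux β η γ (uncurry w) (0, t) = 0 := by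
    simp only [tubeFlux, ← dwss_eq hC2, ← dwt_eq hC1, hwss0 t ht, hwt0]
    ring
  have hflux1 : tubeFlux β η γ (uncurry w) (1, t) = u t * dwst w 1 t - β * η * dwt w 1 t ^ 2 := by
    simp only [tubeFlux, ← dwss_eq hC2, ← dwt_eq hC1, ← dwst_eq hC2, ← dws_eq hC1,
      ← dwsss_eq (hC.of_le (by norm_num)), hwss1 t ht, hwsss1 t ht]
    ring
  have := hasDerivAt_energy_of_contDiff η γ (hC.of_le (by norm_num)) t
  rwa [integral_tubeEnergyRate β η γ hC hpde', hflux1, hflux0, sub_zero] at this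

theorem energy_derivative_feedback_general (β η γ κ : ℝ) (hβ : β ∈ Ioo (0:ℝ) 1)
    (hη : 0 ≤ η) (hκ : 0 ≤ κ)
    (w : ℝ → ℝ → ℝ)
    (hw : IsClassicalSolution β η γ (fun t => -κ * dwst w 1 t) w) :
    (∀ t > (0:ℝ),
      HasDerivAt (energy η γ w)
        (-(β*η) * (dwt w 1 t)^2 - κ * (dwst w 1 t)^2) t ∧
      -(β*η) * (dwt w 1 t)^2 - κ * (dwst w 1 t)^2 ≤ 0) ∧
    AntitoneOn (energy η γ w) (Ioi 0) := by
  have hderiv : ∀ t > (0:ℝ), HasDerivAt (energy η γ w)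
      (-(β*η) * (dwt w 1 t)^2 - κ * (dwst w 1 t)^2) t := fun t ht =>
    (hw.hasDerivAt_energy ht).congr_deriv (by ring)
  have hnonpos : ∀ t, -(β*η) * (dwt w 1 t)^2 - κ * (dwst w 1 t)^2 ≤ 0 := fun t => by
    linarith [mul_nonneg (mul_nonneg hβ.1.le hη) (sq_nonneg (dwt w 1 t)),
      mul_nonneg hκ (sq_nonneg (dwst w 1 t))]
  refine ⟨fun t ht => ⟨hderiv t ht, hnonpos t⟩, ?_⟩
  refine antitoneOn_of_hasDerivWithinAt_nonpos (convex_Ioi 0)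
    (fun t ht => (hderiv t ht).continuousAt.continuousWithinAt) ?_ (fun t _ => hnonpos t)
  rw [interior_Ioi]
  exact fun t ht => (hderiv t ht).hasDerivWithinAt

/-- under the negative-velocity feedback
`u(t) = −κ·(∂²w/∂s∂t)(1,t)`, the energy satisfies
`E′(t) = −βη·((∂w/∂t)(1,t))² − κ·((∂²w/∂s∂t)(1,t))² ≤ 0` for every `t > 0`;
in particular `E` is nonincreasing on `(0,∞)`. -/
theorem energy_derivative_feedback (β η γ κ : ℝ) (hβ : β ∈ Ioo (0:ℝ) 1)
    (hη : 0 ≤ η) (hκ : 0 ≤ κ) (hγ : η^2 < γ)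
    (w : ℝ → ℝ → ℝ)
    (hw : IsClassicalSolution β η γ (fun t => -κ * dwst w 1 t) w) :
    (∀ t > (0:ℝ),
      HasDerivAt (energy η γ w)
        (-(β*η) * (dwt w 1 t)^2 - κ * (dwst w 1 t)^2) t ∧
      -(β*η) * (dwt w 1 t)^2 - κ * (dwst w 1 t)^2 ≤ 0) ∧
    AntitoneOn (energy η γ w) (Ioi 0) :=
  energy_derivative_feedback_general β η γ κ hβ hη hκ w hw
end

section
/- The number λ = 0 is not an eigenvalue of problem (P): every function w : [0,1] → ℂ of class C⁴ satisfying w''''(s) − (γ − η²)·w''(s) = 0 on [0,1] with w(0) = 0, w''(0) = 0, w''(1) = 0 and w'''(1) − (γ − η²)·w'(1) = 0 is identically zero on [0,1]. -/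
/-!
Put `c = γ − η² > 0` and `v = w''`, so that `v'' = c v` and `v(0) = v(1) = 0`. The function
`‖v‖²` has second derivative `2‖v'‖² + 2c‖v‖² ≥ 0`, so it is convex on `[0,1]`; vanishing at both
ends, it vanishes throughout. Hence `w'''(1) = 0`, the last boundary condition forces
`w'(1) = 0`, and `w'' ≡ 0` makes first `w'` and then `w` constant, hence zero.
-/

open Set Complex

/-- An eigenpair of problem (P): `w` is a nonzero `C⁴` function on `[0,1]`
satisfying the ODE `w'''' − (γ−η²)w'' + 2λβη w' + λ²w = 0` together with the
boundary conditions `w(0) = w''(0) = 0`, `w''(1) + λκ w'(1) = 0`,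
`w'''(1) − (γ−η²) w'(1) = 0`. -/
def IsEigenpairP (β η γ κ : ℝ) (l : ℂ) (w : ℝ → ℂ) : Prop :=
  ContDiff ℝ 4 w ∧ (∃ s ∈ Icc (0:ℝ) 1, w s ≠ 0) ∧
  (∀ s ∈ Icc (0:ℝ) 1,
    iteratedDeriv 4 w s - ((γ - η^2 : ℝ) : ℂ) * iteratedDeriv 2 w s
      + 2 * l * ((β * η : ℝ) : ℂ) * deriv w s + l^2 * w s = 0) ∧
  w 0 = 0 ∧ iteratedDeriv 2 w 0 = 0 ∧
  iteratedDeriv 2 w 1 + l * ((κ : ℝ) : ℂ) * deriv w 1 = 0 ∧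
  iteratedDeriv 3 w 1 - ((γ - η^2 : ℝ) : ℂ) * deriv w 1 = 0

def IsEigenvalueP (β η γ κ : ℝ) (l : ℂ) : Prop :=
  ∃ w : ℝ → ℂ, IsEigenpairP β η γ κ l w

section

open scoped RealInnerProductSpace

variable {E : Type*} [NormedAddCommGroup E] [InnerProductSpace ℝ E] {a b : ℝ}

theorem convexOn_norm_sq_of_deriv_deriv_eq_smul {u : ℝ → E} {c : ℝ} (hc : 0 ≤ c)
    (hu : Differentiable ℝ u) (hu' : Differentiable ℝ (deriv u))
    (hode : ∀ s ∈ Ioo a b, deriv (deriv u) s = c • u s) :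
    ConvexOn ℝ (Icc a b) (‖u ·‖ ^ 2) := by
  refine convexOn_of_hasDerivWithinAt2_nonneg (convex_Icc a b)
    (f' := fun s ↦ 2 * ⟪u s, deriv u s⟫)
    (f'' := fun s ↦ 2 * (⟪u s, deriv (deriv u) s⟫ + ⟪deriv u s, deriv u s⟫))
    (hu.continuous.norm.pow 2).continuousOn
    (fun s _ ↦ (hu s).hasDerivAt.norm_sq.hasDerivWithinAt)
    (fun s _ ↦ (((hu s).hasDerivAt.inner ℝ (hu' s).hasDerivAt).const_mul 2).hasDerivWithinAt) ?_
  rw [interior_Icc]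
  intro s hs
  rw [hode s hs, real_inner_smul_right, real_inner_self_eq_norm_sq]
  have := real_inner_self_nonneg (x := deriv u s)
  positivity

theorem eqOn_zero_of_deriv_deriv_eq_smul {u : ℝ → E} {c : ℝ} (hc : 0 ≤ c)
    (hu : Differentiable ℝ u) (hu' : Differentiable ℝ (deriv u))
    (hode : ∀ s ∈ Ioo a b, deriv (deriv u) s = c • u s) (ha : u a = 0) (hb : u b = 0) :
    EqOn u 0 (Icc a b) := by
  intro s hs
  have hab := hs.1.trans hs.2
  have hle := (convexOn_norm_sq_of_deriv_deriv_eq_smul hc hu hu' hode).le_on_segment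
    (left_mem_Icc.2 hab) (right_mem_Icc.2 hab) (segment_eq_Icc hab ▸ hs)
  simpa [ha, hb] using hle

theorem deriv_eq_zero_of_eqOn_zero_Icc {f : ℝ → E} {x : ℝ} (hab : a < b)
    (hf : DifferentiableAt ℝ f x) (h : EqOn f 0 (Icc a b)) (hx : x ∈ Icc a b) :
    deriv f x = 0 := by
  rw [← hf.derivWithin (uniqueDiffOn_Icc hab x hx), derivWithin_congr h (h hx)]
  simp

theorem eq_of_deriv_eqOn_zero_Icc {f : ℝ → E} (hf : Differentiable ℝ f)
    (h : EqOn (deriv f) 0 (Icc a b)) : ∀ x ∈ Icc a b, f x = f a :=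
  constant_of_has_deriv_right_zero hf.continuous.continuousOn fun x hx ↦ by
    simpa [h (Ico_subset_Icc_self hx)] using (hf x).hasDerivAt.hasDerivWithinAt

end

theorem zero_not_eigenvalue_general (η γ : ℝ) (hγ : η^2 < γ) (w : ℝ → ℂ) (hw : ContDiff ℝ 4 w)
    (hode : ∀ s ∈ Icc (0:ℝ) 1,
      iteratedDeriv 4 w s - ((γ - η^2 : ℝ) : ℂ) * iteratedDeriv 2 w s = 0)
    (h0 : w 0 = 0) (h0'' : iteratedDeriv 2 w 0 = 0)
    (h1'' : iteratedDeriv 2 w 1 = 0)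
    (h1''' : iteratedDeriv 3 w 1 - ((γ - η^2 : ℝ) : ℂ) * deriv w 1 = 0) :
    ∀ s ∈ Icc (0:ℝ) 1, w s = 0 := by
  have hc : 0 < γ - η ^ 2 := sub_pos.2 hγ
  have hdiff (m : ℕ) (hm : m < 4) : Differentiable ℝ (iteratedDeriv m w) :=
    hw.differentiable_iteratedDeriv m (mod_cast hm)
  have h2 : iteratedDeriv 2 w = deriv (deriv w) := by rw [iteratedDeriv_succ, iteratedDeriv_one]
  have h3 : iteratedDeriv 3 w = deriv (iteratedDeriv 2 w) := iteratedDeriv_succ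
  have h4 : iteratedDeriv 4 w = deriv (deriv (iteratedDeriv 2 w)) := by
    rw [iteratedDeriv_succ, h3]
  have hw'' : EqOn (iteratedDeriv 2 w) 0 (Icc 0 1) := by
    refine eqOn_zero_of_deriv_deriv_eq_smul hc.le (hdiff 2 (by norm_num))
      (h3 ▸ hdiff 3 (by norm_num)) (fun s hs ↦ ?_) h0'' h1''
    rw [← h4, real_smul]
    linear_combination hode s (Ioo_subset_Icc_self hs)
  have hw'1 : deriv w 1 = 0 := by
    have hw'''1 : iteratedDeriv 3 w 1 = 0 := h3 ▸ deriv_eq_zero_of_eqOn_zero_Icc zero_lt_one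
      (hdiff 2 (by norm_num) 1) hw'' (right_mem_Icc.2 zero_le_one)
    rw [hw'''1, zero_sub, neg_eq_zero, mul_eq_zero] at h1'''
    exact h1'''.resolve_left (ofReal_ne_zero.2 hc.ne')
  have hw' : EqOn (deriv w) 0 (Icc 0 1) := by
    have hconst := eq_of_deriv_eqOn_zero_Icc (iteratedDeriv_one (f := w) ▸ hdiff 1 (by norm_num))
      (h2 ▸ hw'')
    intro s hs
    rw [Pi.zero_apply, hconst s hs, ← hconst 1 (right_mem_Icc.2 zero_le_one), hw'1]
  intro s hs
  rw [eq_of_deriv_eqOn_zero_Icc (hw.differentiable (by norm_num)) hw' s hs, h0]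

/-- `λ = 0` is not an eigenvalue of problem (P): every `C⁴`
function satisfying the corresponding boundary-value problem vanishes
identically on `[0,1]`. -/
theorem zero_not_eigenvalue (β η γ κ : ℝ) (hβ : β ∈ Ioo (0:ℝ) 1) (hη : 0 ≤ η)
    (hκ : 0 ≤ κ) (hγ : η^2 < γ) (w : ℝ → ℂ) (hw : ContDiff ℝ 4 w)
    (hode : ∀ s ∈ Icc (0:ℝ) 1,
      iteratedDeriv 4 w s - ((γ - η^2 : ℝ) : ℂ) * iteratedDeriv 2 w s = 0)
    (h0 : w 0 = 0) (h0'' : iteratedDeriv 2 w 0 = 0)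
    (h1'' : iteratedDeriv 2 w 1 = 0)
    (h1''' : iteratedDeriv 3 w 1 - ((γ - η^2 : ℝ) : ℂ) * deriv w 1 = 0) :
    ∀ s ∈ Icc (0:ℝ) 1, w s = 0 :=
  zero_not_eigenvalue_general η γ hγ w hw hode h0 h0'' h1'' h1'''
end
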